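/- Let M be an abelian locally finite module category over P with the Chevalley property. Then for every object S of M and every simple object T of M, there are only finitely many isomorphism classes of simple objects A in P such that ℓ_T(A⊗S) > 0 (i.e. such that T occurs as a composition factor of A⊗S). -/

import Mathlib

open CategoryTheory MonoidalCategory Limits

universe v u u₂ u₃ w

namespace Tannaka

/-- A module category over a monoidal category `P`: a category `M` with an action
bifunctor `⊗ : P × M → M`, together with associativity and unit constraints satisfying the
pentagon and triangle axioms (Definition 2.3 of the paper). -/
structure ModuleCategoryStruct (P : Type u) [Category.{v} P] [MonoidalCategory P]
    (M : Type u₂) [Category.{w} M] where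
  act : P ⥤ M ⥤ M
  assocIso : ∀ X Y : P, act.obj (X ⊗ Y) ≅ act.obj Y ⋙ act.obj X
  unitIso : act.obj (𝟙_ P) ≅ 𝟭 M
  assoc_natural :
    ∀ {X X' Y Y' : P} (f : X ⟶ X') (g : Y ⟶ Y') (m : M),
      (act.map (f ⊗ₘ g)).app m ≫ (assocIso X' Y').hom.app m =
        (assocIso X Y).hom.app m ≫ (act.obj X).map ((act.map g).app m) ≫
          (act.map f).app ((act.obj Y').obj m)
  pentagon :
    ∀ (X Y Z : P) (m : M),
      (assocIso (X ⊗ Y) Z).hom.app m ≫ (assocIso X Y).hom.app ((act.obj Z).obj m) =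
        (act.map (α_ X Y Z).hom).app m ≫ (assocIso X (Y ⊗ Z)).hom.app m ≫
          (act.obj X).map ((assocIso Y Z).hom.app m)
  triangle :
    ∀ (X : P) (m : M),
      (assocIso X (𝟙_ P)).hom.app m ≫ (act.obj X).map (unitIso.hom.app m) =
        (act.map (ρ_ X).hom).app m

variable {P : Type u} [Category.{v} P] [MonoidalCategory P]

/-- The action of `X : P` on an object `m` of a `P`-module category, `X ⊗ m`. -/
abbrev ModuleCategoryStruct.actObj {M : Type u₂} [Category.{w} M]
    (aM : ModuleCategoryStruct P M) (X : P) (m : M) : M :=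
  (aM.act.obj X).obj m

/-- A `P`-module functor: a functor together with coherent isomorphisms
`F(X ⊗ m) ≅ X ⊗ F(m)` (Definition 2.5 of the paper). -/
structure ModuleFunctor {M : Type u₂} [Category.{w} M] {N : Type u₃} [Category.{v} N]
    (aM : ModuleCategoryStruct P M) (aN : ModuleCategoryStruct P N) where
  F : M ⥤ N
  c : ∀ X : P, aM.act.obj X ⋙ F ≅ F ⋙ aN.act.obj X
  c_natural : ∀ {X Y : P} (f : X ⟶ Y) (m : M),
      F.map ((aM.act.map f).app m) ≫ (c Y).hom.app m =
        (c X).hom.app m ≫ (aN.act.map f).app (F.obj m)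
  c_tensor : ∀ (X Y : P) (m : M),
      F.map ((aM.assocIso X Y).hom.app m) ≫ (c X).hom.app ((aM.act.obj Y).obj m) ≫
          (aN.act.obj X).map ((c Y).hom.app m) =
        (c (X ⊗ Y)).hom.app m ≫ (aN.assocIso X Y).hom.app (F.obj m)
  c_unit : ∀ m : M, (c (𝟙_ P)).hom.app m ≫ aN.unitIso.hom.app (F.obj m) =
        F.map (aM.unitIso.hom.app m)

/-- A morphism of `P`-module functors. -/
structure ModuleNatTrans {M : Type u₂} [Category.{w} M] {N : Type u₃} [Category.{v} N]
    {aM : ModuleCategoryStruct P M} {aN : ModuleCategoryStruct P N}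
    (F G : ModuleFunctor aM aN) where
  app : F.F ⟶ G.F
  compat : ∀ (X : P) (m : M),
      (F.c X).hom.app m ≫ (aN.act.obj X).map (app.app m) =
        app.app ((aM.act.obj X).obj m) ≫ (G.c X).hom.app m

/-- An isomorphism of `P`-module functors. -/
structure ModuleNatIso {M : Type u₂} [Category.{w} M] {N : Type u₃} [Category.{v} N]
    {aM : ModuleCategoryStruct P M} {aN : ModuleCategoryStruct P N}
    (F G : ModuleFunctor aM aN) where
  iso : F.F ≅ G.F
  compat : ∀ (X : P) (m : M),
      (F.c X).hom.app m ≫ (aN.act.obj X).map (iso.hom.app m) =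
        iso.hom.app ((aM.act.obj X).obj m) ≫ (G.c X).hom.app m

/-- An object is semisimple if every monomorphism into it splits
(equivalently, in a finite length abelian category, it is a direct sum of simple objects). -/
def SemisimpleObject {C : Type u₂} [Category.{w} C] (Y : C) : Prop :=
  ∀ ⦃Z : C⦄ (f : Z ⟶ Y), Mono f → ∃ g : Y ⟶ Z, f ≫ g = 𝟙 Z

/-- A semisimple category: every object is semisimple. -/
class SemisimpleCategory (C : Type u₂) [Category.{w} C] : Prop where
  semisimple : ∀ Y : C, SemisimpleObject Y

/-- A `k`-linear category with finite dimensional Hom-spaces. -/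
class HomFinite (k : Type w) (C : Type u₂) [Field k] [Category.{v} C] [Preadditive C]
    [CategoryTheory.Linear k C] : Prop where
  finiteDimensional : ∀ X Y : C, FiniteDimensional k (X ⟶ Y)

section Series

variable {C : Type u₂} [Category.{w} C] [Abelian C]

/-- A composition series of an object of an abelian category: a finite monotone chain of
subobjects from `⊥` to `⊤` all of whose successive quotients are simple. -/
structure CompSeries (Y : C) where
  n : ℕ
  s : Fin (n + 1) → Subobject Y
  mono : Monotone s
  bot_eq : s 0 = ⊥
  top_eq : s (Fin.last n) = ⊤
  simple : ∀ i : Fin n,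
    Simple (cokernel (Subobject.ofLE (s i.castSucc) (s i.succ)
      (mono (Fin.castSucc_le_succ i))))

/-- The `i`-th composition factor of a composition series. -/
noncomputable def CompSeries.factor {Y : C} (cs : CompSeries Y) (i : Fin cs.n) : C :=
  cokernel (Subobject.ofLE (cs.s i.castSucc) (cs.s i.succ) (cs.mono (Fin.castSucc_le_succ i)))

/-- `ℓ_S(Y)`: the number of composition factors of the series isomorphic to `S`. -/
noncomputable def CompSeries.mult {Y : C} (cs : CompSeries Y) (S : C) : ℕ :=
  Nat.card { i : Fin cs.n // Nonempty (cs.factor i ≅ S) }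

/-- All objects have finite length. -/
class FiniteLength (C : Type u₂) [Category.{w} C] [Abelian C] : Prop where
  finiteLength : ∀ Y : C, Nonempty (CompSeries Y)

/-- `f : Q ⟶ N` is an essential epimorphism if it is an epimorphism and no proper
subobject of `Q` maps epimorphically onto `N`. -/
def IsEssentialEpi {Q N : C} (f : Q ⟶ N) : Prop :=
  Epi f ∧ ∀ A : Subobject Q, A ≠ ⊤ → ¬ Epi (A.arrow ≫ f)

/-- `G` is a set of generators (over `k`): every object is a subquotient of a finite
direct sum of objects of `G`. -/
def IsGeneratingSet (G : Set C) : Prop :=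
  haveI : HasFiniteBiproducts C := Abelian.hasFiniteBiproducts
  ∀ Y : C, ∃ (n : ℕ) (g : Fin n → C) (_ : ∀ i, g i ∈ G)
    (A : Subobject (⨁ g)) (q : (A : C) ⟶ Y), Epi q

end Series

section ModulePred

variable {P : Type u} [Category.{v} P] [MonoidalCategory P] [Preadditive P]
variable {M : Type u₂} [Category.{v} M]

/-- The functor `X ↦ Hom_M(X ⊗ M₁, M₂)`; its representing ind-object of `P` is the
internal hom of `M₁,M₂`. -/
@[simps]
def internalHomFunctor (aM : ModuleCategoryStruct P M) (M₁ M₂ : M) : Pᵒᵖ ⥤ Type v where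
  obj X := ((aM.act.obj X.unop).obj M₁ ⟶ M₂)
  map f := TypeCat.ofHom fun g => (aM.act.map f.unop).app M₁ ≫ g
  map_id X := by ext g; simp
  map_comp f g := by ext h; simp

variable [Abelian M]

/-- A module category is locally finite over `P` if all internal homs are (representable by)
objects of `P` and every object has finite length. -/
def LocallyFiniteOver (aM : ModuleCategoryStruct P M) : Prop :=
  (∀ M₁ M₂ : M, (internalHomFunctor aM M₁ M₂).IsRepresentable) ∧
    (∀ m : M, Nonempty (CompSeries m))

/-- A module category is finitely generated over `P` if there is an object `G` such that
every object is a subquotient of `X ⊗ G` for some `X : P`. -/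
def FinitelyGeneratedOver (aM : ModuleCategoryStruct P M) : Prop :=
  ∃ G : M, ∀ Y : M, ∃ (X : P) (A : Subobject (aM.actObj X G)) (q : (A : M) ⟶ Y), Epi q

/-- The Chevalley property: `X ⊗ m` is semisimple whenever `X` and `m` are simple. -/
def ChevalleyProperty (aM : ModuleCategoryStruct P M) : Prop :=
  ∀ (X : P) (m : M), Simple X → Simple m → SemisimpleObject (aM.actObj X m)

end ModulePred

/-!
Since `A` has a left dual, `A ⊗ -` is a left adjoint, hence right exact; so if `T` is a
composition factor of `A ⊗ S`, it is a subquotient of `A ⊗ Sⱼ` for some composition factor `Sⱼ`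
of `S`. By the Chevalley property `A ⊗ Sⱼ` is semisimple, so there is a nonzero map
`A ⊗ Sⱼ ⟶ T`, that is, a nonzero map from `A` to the internal hom `Hⱼ = Hom(Sⱼ, T)`.
As `P` is semisimple, `A` is then a direct summand of `Hⱼ`, and pairwise non-isomorphic simple
summands of `Hⱼ` give linearly independent idempotents of the finite-dimensional algebra
`End Hⱼ`.
-/

section Subquotient

variable {C : Type u₂} [Category.{w} C]

def IsSubquotient (T Y : C) : Prop :=
  ∃ (Z : C) (i : Z ⟶ Y) (p : Z ⟶ T), Mono i ∧ Epi p

namespace IsSubquotient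

variable {T Y : C}

lemma of_mono {Y' : C} (h : IsSubquotient T Y) (f : Y ⟶ Y') [Mono f] : IsSubquotient T Y' := by
  obtain ⟨Z, i, p, _, hp⟩ := h
  exact ⟨Z, i ≫ f, p, mono_comp _ _, hp⟩

lemma not_isZero [HasZeroMorphisms C] [Simple T] (h : IsSubquotient T Y) : ¬ IsZero Y := by
  obtain ⟨Z, i, p, _, _⟩ := h
  exact fun hY => Simple.not_isZero T ((hY.of_mono i).of_epi p)

lemma source_or_cokernel [Abelian C] [Simple T] {W : C} (g : W ⟶ Y) (h : IsSubquotient T Y) :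
    IsSubquotient T W ∨ IsSubquotient T (cokernel g) := by
  obtain ⟨Z, i, p, _, _⟩ := h
  -- `kernel q` is `Z ∩ im g`: either `p` kills it, and then factors through
  -- `Z / (Z ∩ im g) ↪ cokernel g`, or it maps onto `T` and is covered by its preimage in `W`.
  let q : Z ⟶ cokernel g := i ≫ cokernel.π g
  by_cases hK : kernel.ι q ≫ p = 0
  · have : Epi (cokernel.desc (kernel.ι q) p hK) := epi_of_epi_fac (cokernel.π_desc _ _ _)
    exact Or.inr ⟨Abelian.coimage q, Abelian.factorThruCoimage q, _, inferInstance, this⟩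
  · have : Epi (kernel.ι q ≫ p) := epi_of_nonzero_to_simple hK
    let j : kernel q ⟶ Abelian.image g :=
      kernel.lift _ (kernel.ι q ≫ i) (by simp [q])
    have : Mono j := mono_of_mono_fac (kernel.lift_ι _ _ _)
    exact Or.inl ⟨pullback (Abelian.factorThruImage g) j, pullback.fst _ _,
      pullback.snd _ _ ≫ kernel.ι q ≫ p, inferInstance, epi_comp _ _⟩

end IsSubquotient

lemma SemisimpleObject.exists_ne_zero_of_isSubquotient [HasZeroMorphisms C] {Y T : C} [Simple T]
    (hY : SemisimpleObject Y) (h : IsSubquotient T Y) : ∃ f : Y ⟶ T, f ≠ 0 := by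
  obtain ⟨Z, i, p, hi, _⟩ := h
  obtain ⟨r, hr⟩ := hY i hi
  refine ⟨r ≫ p, fun h0 => Simple.not_isZero T (IsZero.of_epi_eq_zero p ?_)⟩
  rw [← Category.id_comp p, ← hr, Category.assoc, h0, comp_zero]

variable [Abelian C]

lemma CompSeries.isSubquotient_of_mult_pos {Y T : C} (cs : CompSeries Y) (h : 0 < cs.mult T) :
    IsSubquotient T Y := by
  obtain ⟨⟨i, ⟨e⟩⟩⟩ := Nat.card_pos_iff.mp h |>.1
  rw [CompSeries.factor] at e
  exact ⟨_, (cs.s i.succ).arrow, cokernel.π _ ≫ e.hom, inferInstance, epi_comp _ _⟩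

lemma CompSeries.exists_isSubquotient_map_factor {D : Type*} [Category D] [Abelian D]
    (F : C ⥤ D) [F.PreservesZeroMorphisms] [PreservesColimitsOfShape WalkingParallelPair F]
    {S : C} (cs : CompSeries S) {T : D} [Simple T] (h : IsSubquotient T (F.obj S)) :
    ∃ j, IsSubquotient T (F.obj (cs.factor j)) := by
  suffices key : ∀ i, IsSubquotient T (F.obj (cs.s i)) →
      ∃ j, IsSubquotient T (F.obj (cs.factor j)) by
    have : IsIso (cs.s (Fin.last cs.n)).arrow :=
      (Subobject.isIso_arrow_iff_eq_top _).mpr cs.top_eq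
    exact key _ (h.of_mono (F.map (inv (cs.s (Fin.last cs.n)).arrow)))
  intro i
  induction i using Fin.induction with
  | zero =>
    intro h0
    refine absurd (F.map_isZero ?_) h0.not_isZero
    rw [cs.bot_eq]
    exact IsZero.of_iso (isZero_zero C) Subobject.botCoeIsoZero
  | succ i ih =>
    intro hi
    refine (hi.source_or_cokernel (F.map (Subobject.ofLE _ _ (cs.mono i.castSucc_le_succ)))).elim
      ih fun hc => ⟨i, ?_⟩
    rw [CompSeries.factor]
    exact hc.of_mono (PreservesCokernel.iso F _).inv

end Subquotient

section IsoClasses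

variable {C : Type u₂} [Category.{w} C]

def isoClassesOf (Q : C → Prop) : Set (Quotient (isIsomorphicSetoid C)) :=
  Quotient.mk _ '' {A | Q A}

lemma exists_fin_iso_reps_of_finite {Q : C → Prop} (h : (isoClassesOf Q).Finite) :
    ∃ (n : ℕ) (rep : Fin n → C), ∀ A, Q A → ∃ i, Nonempty (A ≅ rep i) := by
  have := h.to_subtype
  obtain ⟨n, ⟨e⟩⟩ := Finite.exists_equiv_fin (isoClassesOf Q)
  refine ⟨n, fun i => (e.symm i).1.out, fun A hA => ⟨e ⟨_, A, hA, rfl⟩, ?_⟩⟩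
  simp only [Equiv.symm_apply_apply]
  exact (Quotient.mk_out (s := isIsomorphicSetoid C) A).map Iso.symm

variable (k : Type*) [Field k] [Preadditive C] [Linear k C] [HasKernels C]

lemma card_le_finrank_end_of_retractions {ι : Type*} [Fintype ι] {H : C}
    [FiniteDimensional k (H ⟶ H)] (A : ι → C) [∀ i, Simple (A i)]
    (hA : ∀ i j, Nonempty (A i ≅ A j) → i = j)
    (g : ∀ i, A i ⟶ H) (t : ∀ i, H ⟶ A i) (hgt : ∀ i, g i ≫ t i = 𝟙 _) :
    Fintype.card ι ≤ Module.finrank k (H ⟶ H) := by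
  have orth : ∀ i j, i ≠ j → g j ≫ t i = 0 := fun i j hij => by
    by_contra hne
    have := isIso_of_hom_simple hne
    exact hij (hA j i ⟨asIso (g j ≫ t i)⟩).symm
  refine LinearIndependent.fintype_card_le_finrank (R := k) (b := fun i => t i ≫ g i) ?_
  rw [Fintype.linearIndependent_iff]
  intro c hc j
  have hj : c j • g j = 0 := by
    have := congr_arg (g j ≫ ·) hc
    simp only [Preadditive.comp_sum, Linear.comp_smul, comp_zero] at this
    rwa [Finset.sum_eq_single j (fun i _ hij => by rw [reassoc_of% orth i j hij, zero_comp,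
      smul_zero]) (by simp), reassoc_of% hgt] at this
  refine (smul_eq_zero.mp hj).resolve_right fun h0 => id_nonzero (A j) ?_
  rw [← hgt, h0, zero_comp]

lemma finite_isoClassesOf_simple_hom_ne_zero {H : C} (hH : SemisimpleObject H)
    [FiniteDimensional k (H ⟶ H)] :
    (isoClassesOf fun A : C => Simple A ∧ ∃ g : A ⟶ H, g ≠ 0).Finite := by
  by_contra hinf
  obtain ⟨s, hs, hcard⟩ := Set.Infinite.exists_subset_card_eq hinf (Module.finrank k (H ⟶ H) + 1)
  choose A hA hAs using fun q : s => hs q.2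
  choose g hg using fun q => (hA q).2
  have := fun q => (hA q).1
  choose t ht using fun q => hH (g q) (mono_of_nonzero_from_simple (hg q))
  have hdistinct : ∀ q q', Nonempty (A q ≅ A q') → q = q' := fun q q' he =>
    Subtype.ext (by rw [← hAs q, ← hAs q']; exact Quotient.sound he)
  have := card_le_finrank_end_of_retractions k A hdistinct g t ht
  simp only [Fintype.card_coe, hcard] at this
  omega

end IsoClasses

namespace ModuleCategoryStruct

variable {M : Type u₂} [Category.{w} M] (aM : ModuleCategoryStruct P M)

lemma assoc_natural_right (X : P) {Y Y' : P} (g : Y ⟶ Y') (m : M) :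
    (aM.act.map (X ◁ g)).app m ≫ (aM.assocIso X Y').hom.app m =
      (aM.assocIso X Y).hom.app m ≫ (aM.act.obj X).map ((aM.act.map g).app m) := by
  simpa using aM.assoc_natural (𝟙 X) g m

lemma assoc_natural_left {X X' : P} (f : X ⟶ X') (Y : P) (m : M) :
    (aM.act.map (f ▷ Y)).app m ≫ (aM.assocIso X' Y).hom.app m =
      (aM.assocIso X Y).hom.app m ≫ (aM.act.map f).app ((aM.act.obj Y).obj m) := by
  simpa using aM.assoc_natural f (𝟙 Y) m

lemma map_assocIso_inv_natural_right (X : P) {Y Y' : P} (g : Y ⟶ Y') (m : M) :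
    (aM.act.obj X).map ((aM.act.map g).app m) ≫ (aM.assocIso X Y').inv.app m =
      (aM.assocIso X Y).inv.app m ≫ (aM.act.map (X ◁ g)).app m := by
  rw [← cancel_epi ((aM.assocIso X Y).hom.app m), Iso.hom_inv_id_app_assoc,
    ← reassoc_of% aM.assoc_natural_right, Iso.hom_inv_id_app, Category.comp_id]

lemma assocIso_inv_natural_left {X X' : P} (f : X ⟶ X') (Y : P) (m : M) :
    (aM.act.map f).app ((aM.act.obj Y).obj m) ≫ (aM.assocIso X' Y).inv.app m =
      (aM.assocIso X Y).inv.app m ≫ (aM.act.map (f ▷ Y)).app m := by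
  rw [← cancel_epi ((aM.assocIso X Y).hom.app m), Iso.hom_inv_id_app_assoc,
    ← reassoc_of% aM.assoc_natural_left, Iso.hom_inv_id_app, Category.comp_id]

lemma map_assocIso_hom_comp_assocIso_inv (X Y Z : P) (m : M) :
    (aM.act.obj X).map ((aM.assocIso Y Z).hom.app m) ≫
        (aM.assocIso X Y).inv.app ((aM.act.obj Z).obj m) =
      (aM.assocIso X (Y ⊗ Z)).inv.app m ≫ (aM.act.map (α_ X Y Z).inv).app m ≫
        (aM.assocIso (X ⊗ Y) Z).hom.app m := by
  rw [← cancel_epi ((aM.assocIso X (Y ⊗ Z)).hom.app m),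
    ← cancel_mono ((aM.assocIso X Y).hom.app _), Iso.hom_inv_id_app_assoc]
  simp [aM.pentagon]

lemma assocIso_hom_comp_map_assocIso_inv (X Y Z : P) (m : M) :
    (aM.assocIso X Y).hom.app ((aM.act.obj Z).obj m) ≫
        (aM.act.obj X).map ((aM.assocIso Y Z).inv.app m) =
      (aM.assocIso (X ⊗ Y) Z).inv.app m ≫ (aM.act.map (α_ X Y Z).hom).app m ≫
        (aM.assocIso X (Y ⊗ Z)).hom.app m := by
  rw [← cancel_epi ((aM.assocIso (X ⊗ Y) Z).hom.app m), Iso.hom_inv_id_app_assoc,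
    reassoc_of% aM.pentagon]
  simp

-- Kelly's lemma: a consequence of the pentagon and triangle axioms.
lemma assocIso_unit_comp_unitIso (Z : P) (m : M) :
    (aM.assocIso (𝟙_ P) Z).hom.app m ≫ aM.unitIso.hom.app ((aM.act.obj Z).obj m) =
      (aM.act.map (λ_ Z).hom).app m := by
  apply (Functor.Faithful.of_iso aM.unitIso.symm).map_injective
  rw [Functor.map_comp, ← cancel_epi ((aM.assocIso (𝟙_ P) ((𝟙_ P) ⊗ Z)).hom.app m),
    ← cancel_epi ((aM.act.map (α_ (𝟙_ P) (𝟙_ P) Z).hom).app m),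
    ← reassoc_of% (aM.pentagon (𝟙_ P) (𝟙_ P) Z m), aM.triangle (𝟙_ P),
    ← aM.assoc_natural_left (ρ_ (𝟙_ P)).hom Z m, ← aM.assoc_natural_right (𝟙_ P) (λ_ Z).hom m,
    ← NatTrans.comp_app_assoc, ← Functor.map_comp, MonoidalCategory.triangle]

lemma left_triangle_of_exactPairing (X Y : P) [ExactPairing X Y] (m : M) :
    (aM.act.obj Y).map ((aM.unitIso.inv ≫ aM.act.map (η_ X Y) ≫ (aM.assocIso X Y).hom).app m) ≫
      ((aM.assocIso Y X).inv ≫ aM.act.map (ε_ X Y) ≫ aM.unitIso.hom).app ((aM.act.obj Y).obj m) =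
    𝟙 _ := by
  simp only [NatTrans.comp_app]
  rw [Functor.map_comp, Functor.map_comp, Category.assoc, Category.assoc,
    reassoc_of% aM.map_assocIso_hom_comp_assocIso_inv,
    reassoc_of% aM.map_assocIso_inv_natural_right,
    ← reassoc_of% aM.assoc_natural_left, aM.assocIso_unit_comp_unitIso]
  simp only [← NatTrans.comp_app, ← Functor.map_comp]
  rw [reassoc_of% (ExactPairing.coevaluation_evaluation X Y), Iso.inv_hom_id, Category.comp_id,
    NatTrans.comp_app, ← aM.triangle, Iso.inv_hom_id_app_assoc, ← Functor.map_comp,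
    Iso.inv_hom_id_app, CategoryTheory.Functor.map_id]

lemma right_triangle_of_exactPairing (X Y : P) [ExactPairing X Y] (m : M) :
    (aM.unitIso.inv ≫ aM.act.map (η_ X Y) ≫ (aM.assocIso X Y).hom).app ((aM.act.obj X).obj m) ≫
      (aM.act.obj X).map (((aM.assocIso Y X).inv ≫ aM.act.map (ε_ X Y) ≫ aM.unitIso.hom).app m) =
    𝟙 _ := by
  simp only [NatTrans.comp_app, Category.assoc]
  rw [Functor.map_comp, Functor.map_comp, reassoc_of% aM.assocIso_hom_comp_map_assocIso_inv,
    reassoc_of% aM.assocIso_inv_natural_left, ← reassoc_of% aM.assoc_natural_right, aM.triangle]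
  simp only [← NatTrans.comp_app, ← Functor.map_comp]
  rw [reassoc_of% (ExactPairing.evaluation_coevaluation X Y), Iso.inv_hom_id, Category.comp_id,
    NatTrans.comp_app, ← aM.assocIso_unit_comp_unitIso, Iso.inv_hom_id_app_assoc,
    Iso.inv_hom_id_app]

noncomputable def actAdjunction (X Y : P) [ExactPairing X Y] :
    aM.act.obj Y ⊣ aM.act.obj X where
  unit := aM.unitIso.inv ≫ aM.act.map (η_ X Y) ≫ (aM.assocIso X Y).hom
  counit := (aM.assocIso Y X).inv ≫ aM.act.map (ε_ X Y) ≫ aM.unitIso.hom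
  left_triangle_components := aM.left_triangle_of_exactPairing X Y
  right_triangle_components := aM.right_triangle_of_exactPairing X Y

end ModuleCategoryStruct

section ModuleCategory

variable [Preadditive P] {M : Type u₂} [Category.{v} M] [Abelian M]
  {aM : ModuleCategoryStruct P M}

lemma ChevalleyProperty.exists_ne_zero_of_mult_pos (hch : ChevalleyProperty aM) {A : P}
    [HasLeftDual A] (hA : Simple A) {S T : M} (hT : Simple T) (csS : CompSeries S)
    {cs : CompSeries (aM.actObj A S)} (h : 0 < cs.mult T) :
    ∃ j, ∃ f : aM.actObj A (csS.factor j) ⟶ T, f ≠ 0 := by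
  have : (aM.act.obj A).IsLeftAdjoint := (aM.actAdjunction (ᘁA) A).isLeftAdjoint
  obtain ⟨j, hj⟩ := csS.exists_isSubquotient_map_factor (aM.act.obj A)
    (cs.isSubquotient_of_mult_pos h)
  exact ⟨j, (hch A _ hA (csS.simple j)).exists_ne_zero_of_isSubquotient hj⟩

lemma exists_ne_zero_of_representableBy {M₁ M₂ : M} {H : P}
    (e : (internalHomFunctor aM M₁ M₂).RepresentableBy H) {X : P}
    {f : aM.actObj X M₁ ⟶ M₂} (hf : f ≠ 0) : ∃ g : X ⟶ H, g ≠ 0 :=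
  have := @Equiv.nontrivial _ _ e.homEquiv (nontrivial_of_ne (α := aM.actObj X M₁ ⟶ M₂) f 0 hf)
  exists_ne 0

end ModuleCategory

/-- **(First step in the proof of Theorem 2.14 of the paper.)**
Let `P` be an essentially small `k`-linear semisimple abelian rigid monoidal category with
finite dimensional Hom-spaces, and let `M` be an abelian locally finite module category
over `P` with the Chevalley property.  Then for every object `S` of `M` and every simple
object `T` of `M` there are only finitely many isomorphism classes of simple objects
`A` of `P` such that `ℓ_T(A ⊗ S) > 0`. -/
theorem finitely_many_simples_acting_nontrivially
    {k : Type w} [Field k]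
    {P : Type u} [Category.{v} P] [MonoidalCategory P] [Abelian P]
    [CategoryTheory.Linear k P] [MonoidalPreadditive P] [MonoidalLinear k P]
    [RigidCategory P] [SemisimpleCategory P] [HomFinite k P] [EssentiallySmall.{v} P]
    {M : Type u₂} [Category.{v} M] [Abelian M] [CategoryTheory.Linear k M]
    (aM : ModuleCategoryStruct P M)
    [∀ X : P, (aM.act.obj X).Additive] [∀ X : P, (aM.act.obj X).Linear k]
    (hlf : LocallyFiniteOver aM)
    (hch : ChevalleyProperty aM)
    (S T : M) (hT : Simple T) :
    ∃ (n : ℕ) (rep : Fin n → P),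
      ∀ A : P, Simple A →
        (∃ cs : CompSeries (aM.actObj A S), 0 < cs.mult T) →
        ∃ i : Fin n, Nonempty (A ≅ rep i) := by
  suffices hfin : (isoClassesOf fun A : P =>
      Simple A ∧ ∃ cs : CompSeries (aM.actObj A S), 0 < cs.mult T).Finite by
    obtain ⟨n, rep, hrep⟩ := exists_fin_iso_reps_of_finite hfin
    exact ⟨n, rep, fun A hA hAT => hrep A ⟨hA, hAT⟩⟩
  obtain ⟨hrep, hfl⟩ := hlf
  obtain ⟨csS⟩ := hfl S
  choose H hH using fun j => (hrep (csS.factor j) T).has_representation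
  have := HomFinite.finiteDimensional (k := k) (C := P)
  refine (Set.finite_iUnion fun j => finite_isoClassesOf_simple_hom_ne_zero k
    (SemisimpleCategory.semisimple (H j))).subset ?_
  rintro _ ⟨A, ⟨hA, cs, hcs⟩, rfl⟩
  obtain ⟨j, f, hf⟩ := hch.exists_ne_zero_of_mult_pos hA hT csS hcs
  exact Set.mem_iUnion.2 ⟨j, A, ⟨hA, exists_ne_zero_of_representableBy (hH j).some hf⟩, rfl⟩

end Tannaka
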